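/- Let w ∈ S_n be a permutation that consecutively contains a pattern of the form 1 (m−1) (m−2) ⋯ 2 m for some m ≥ 4; that is, there exist m ≥ 4 and an index i with 1 ≤ i ≤ n−m+1 such that the standardization of w(i) w(i+1) ⋯ w(i+m−1) equals 1 (m−1) (m−2) ⋯ 2 m. Then w is an Atniss win in the weak order lattice on S_n. -/

import Mathlib

variable {L : Type*} [Preorder L]

def ungN (x : L) : Set L :=
  {y | ∃ T : Set L, T.Nonempty ∧ (∀ t ∈ T, t ⋖ x) ∧ IsGLB (insert x T) y}

lemma ungN_lt {x y : L} (h : y ∈ ungN x) : y < x := by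
  obtain ⟨T, ⟨t, ht⟩, hc, hglb⟩ := h
  exact lt_of_le_of_lt (hglb.1 (Set.mem_insert_of_mem x ht)) (hc t ht).lt

attribute [local instance] WellFoundedLT.toWellFoundedRelation

mutual
  def atnissWin [WellFoundedLT L] (x : L) : Prop :=
    ∃ y, ∃ _ : y ∈ ungN x, eetaWin y
  termination_by x
  decreasing_by exact ungN_lt ‹_›

  def eetaWin [WellFoundedLT L] (x : L) : Prop :=
    ∀ y, y ∈ ungN x → atnissWin y
  termination_by x
  decreasing_by exact ungN_lt ‹_›
end

/-- The symmetric group on `Fin n`, to be equipped with the (right) weak order. -/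
abbrev Weak (n : ℕ) := Equiv.Perm (Fin n)

/-- The set of inversions of a permutation `w`: pairs `(i, j)` with `i < j` and
`w⁻¹ i > w⁻¹ j`. -/
def invSet {n : ℕ} (w : Weak n) : Finset (Fin n × Fin n) :=
  Finset.univ.filter fun p => p.1 < p.2 ∧ w.symm p.2 < w.symm p.1

/-- The (right) weak order on `S_n`: `u ≤ v` iff every inversion of `u` is an
inversion of `v`. -/
instance {n : ℕ} : Preorder (Weak n) where
  le u v := invSet u ⊆ invSet v
  le_refl u := subset_rfl
  le_trans u v w h1 h2 := fun x hx => h2 (h1 hx)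

instance {n : ℕ} : WellFoundedLT (Weak n) := by
  constructor
  have key : ∀ u v : Weak n, u < v → (invSet u).card < (invSet v).card := by
    intro u v h
    have h' := lt_iff_le_not_ge.mp h
    have hle : invSet u ⊆ invSet v := h'.1
    have hnle : ¬ invSet v ⊆ invSet u := fun hc => h'.2 hc
    exact Finset.card_lt_card (Finset.ssubset_def.mpr ⟨hle, hnle⟩)
  exact Subrelation.wf (fun {u v} h => key u v h)
    (InvImage.wf (fun w => (invSet w).card) Nat.lt_wfRel.wf)

open Classical in
lemma atniss_or_eeta {L : Type*} [Preorder L] [WellFoundedLT L] (x : L) :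
    atnissWin x ∨ eetaWin x := by
  induction x using IsWellFounded.induction (r := (· < · : L → L → Prop)) with
  | _ x ih =>
    by_cases hc : ∃ y, ∃ _ : y ∈ ungN x, eetaWin y
    · exact Or.inl (by rw [atnissWin]; exact hc)
    · refine Or.inr ?_
      rw [eetaWin]
      intro y hy
      rcases ih y (ungN_lt hy) with h | h
      · exact h
      · exact absurd ⟨y, hy, h⟩ hc

section Basic
namespace UngarAux

variable {n : ℕ}

lemma mem_invSet {w : Weak n} {p : Fin n × Fin n} :
    p ∈ invSet w ↔ p.1 < p.2 ∧ w.symm p.2 < w.symm p.1 := by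
  simp [invSet]

lemma le_def {u v : Weak n} : u ≤ v ↔ invSet u ⊆ invSet v := Iff.rfl

lemma invSet_trans {t : Weak n} {x y z : Fin n}
    (h1 : (x,y) ∈ invSet t) (h2 : (y,z) ∈ invSet t) : (x,z) ∈ invSet t := by
  rw [mem_invSet] at *
  exact ⟨h1.1.trans h2.1, h2.2.trans h1.2⟩

lemma invSet_between {t : Weak n} {x y z : Fin n} (hxy : x < y) (hyz : y < z)
    (h : (x, z) ∈ invSet t) : (x, y) ∈ invSet t ∨ (y, z) ∈ invSet t := by
  rw [mem_invSet] at h ⊢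
  rw [mem_invSet]
  rcases lt_or_ge (t.symm y) (t.symm x) with h1 | h1
  · exact Or.inl ⟨hxy, h1⟩
  · exact Or.inr ⟨hyz, lt_of_lt_of_le h.2 h1⟩

lemma invSet_inj {u v : Weak n} (h : invSet u = invSet v) : u = v := by
  have key : ∀ x y : Fin n, x < y → (u.symm y < u.symm x ↔ v.symm y < v.symm x) := by
    intro x y hxy
    constructor
    · intro hl
      have hm : (x,y) ∈ invSet u := mem_invSet.mpr ⟨hxy, hl⟩
      rw [h] at hm
      exact (mem_invSet.mp hm).2
    · intro hl
      have hm : (x,y) ∈ invSet v := mem_invSet.mpr ⟨hxy, hl⟩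
      rw [← h] at hm
      exact (mem_invSet.mp hm).2
  have key2 : ∀ x y : Fin n, u.symm x < u.symm y ↔ v.symm x < v.symm y := by
    intro x y
    rcases lt_trichotomy x y with hxy | rfl | hxy
    · have hgen : ∀ e : Weak n, e.symm x ≠ e.symm y → (e.symm x < e.symm y ↔ ¬ e.symm y < e.symm x) :=
        fun e hne => ⟨fun h1 h2 => absurd (h1.trans h2) (lt_irrefl _),
          fun h2 => hne.lt_or_gt.resolve_right h2⟩
      have hne : u.symm x ≠ u.symm y := fun hc => (ne_of_lt hxy) (u.symm.injective hc)
      have hne' : v.symm x ≠ v.symm y := fun hc => (ne_of_lt hxy) (v.symm.injective hc)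
      rw [hgen u hne, hgen v hne', key x y hxy]
    · simp
    · exact key y x hxy
  have hsm : StrictMono (fun a => v.symm (u a)) := by
    intro a b hab
    have := (key2 (u a) (u b)).mp
    simp only [Equiv.symm_apply_apply] at this ⊢
    exact this hab
  have hid : (fun a : Fin n => v.symm (u a)) = id := by
    refine (hsm.range_inj strictMono_id).mp ?_
    rw [Set.range_id]
    exact Set.range_eq_univ.mpr (v.symm.surjective.comp u.surjective)
  refine Equiv.ext fun a => ?_
  have := congrFun hid a
  simp only [id_eq] at this
  calc u a = v (v.symm (u a)) := (v.apply_symm_apply _).symm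
  _ = v a := by rw [this]
end UngarAux
end Basic

section Swap
namespace UngarAux
variable {n : ℕ}

lemma swap_val {k : ℕ} (hk : k + 1 < n) (a : Fin n) :
    ((Equiv.swap (⟨k, by omega⟩ : Fin n) ⟨k+1, hk⟩) a : ℕ)
      = if (a:ℕ) = k then k+1 else if (a:ℕ) = k+1 then k else a := by
  rcases eq_or_ne a ⟨k, by omega⟩ with rfl | h1
  · rw [Equiv.swap_apply_left]; simp
  · rcases eq_or_ne a ⟨k+1, hk⟩ with rfl | h2
    · rw [Equiv.swap_apply_right]; simp
    · rw [Equiv.swap_apply_of_ne_of_ne h1 h2]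
      have b1 : (a:ℕ) ≠ k := fun hc => h1 (Fin.ext hc)
      have b2 : (a:ℕ) ≠ k+1 := fun hc => h2 (Fin.ext hc)
      simp [b1, b2]

lemma symm_mul_swap {w : Weak n} {k : ℕ} (hk : k + 1 < n) (v : Fin n) :
    (w * Equiv.swap (⟨k, by omega⟩ : Fin n) ⟨k+1, hk⟩).symm v
      = Equiv.swap (⟨k, by omega⟩ : Fin n) ⟨k+1, hk⟩ (w.symm v) := by
  simp [Equiv.Perm.mul_def, Equiv.symm_trans_apply]

lemma d_mem_invSet {w : Weak n} {k : ℕ} (hk : k + 1 < n)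
    (hdes : w ⟨k+1, hk⟩ < w ⟨k, by omega⟩) :
    (w ⟨k+1, hk⟩, w ⟨k, by omega⟩) ∈ invSet w := by
  rw [mem_invSet]
  refine ⟨hdes, ?_⟩
  simp only [Equiv.symm_apply_apply]
  exact Fin.mk_lt_mk.mpr (by omega)

lemma invSet_mul_swap {w : Weak n} {k : ℕ} (hk : k + 1 < n)
    (hdes : w ⟨k+1, hk⟩ < w ⟨k, by omega⟩) :
    invSet (w * Equiv.swap (⟨k, by omega⟩ : Fin n) ⟨k+1, hk⟩)
      = invSet w \ {(w ⟨k+1, hk⟩, w ⟨k, by omega⟩)} := by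
  ext p
  obtain ⟨x, y⟩ := p
  simp only [mem_invSet, Finset.mem_sdiff, Finset.mem_singleton, Prod.mk.injEq]
  have ex1 : x = w ⟨k+1, hk⟩ ↔ (w.symm x : ℕ) = k+1 := by
    rw [← Equiv.symm_apply_eq, Fin.ext_iff]
  have ey1 : y = w ⟨k, by omega⟩ ↔ (w.symm y : ℕ) = k := by
    rw [← Equiv.symm_apply_eq, Fin.ext_iff]
  have ex0 : x = w ⟨k, by omega⟩ ↔ (w.symm x : ℕ) = k := by
    rw [← Equiv.symm_apply_eq, Fin.ext_iff]
  have ey0 : y = w ⟨k+1, hk⟩ ↔ (w.symm y : ℕ) = k+1 := by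
    rw [← Equiv.symm_apply_eq, Fin.ext_iff]
  rw [symm_mul_swap hk, symm_mul_swap hk]
  simp only [Fin.lt_def, swap_val hk]
  constructor
  · rintro ⟨hxy, hlt⟩
    by_cases c1 : (w.symm x : ℕ) = k
    · -- x at position k; then y at position k+1 impossible (descent); else order preserved
      by_cases c2 : (w.symm y : ℕ) = k+1
      · exfalso
        have hx : x = w ⟨k, by omega⟩ := ex0.mpr c1
        have hy : y = w ⟨k+1, hk⟩ := ey0.mpr c2
        have hd2 : (y:ℕ) < (x:ℕ) := by
          have hh := Fin.lt_def.mp hdes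
          rw [← hx, ← hy] at hh; exact hh
        omega
      · refine ⟨⟨hxy, ?_⟩, ?_⟩
        · simp only [c1, if_pos rfl] at hlt
          split_ifs at hlt <;> omega
        · rintro ⟨hc, -⟩; rw [ex1] at hc; omega
    · by_cases c1' : (w.symm x : ℕ) = k+1
      · by_cases c2 : (w.symm y : ℕ) = k
        · exfalso
          rw [if_pos c2, if_neg (by omega), if_pos c1'] at hlt
          omega
        · refine ⟨⟨hxy, ?_⟩, ?_⟩
          · simp only [c1'] at hlt
            split_ifs at hlt <;> omega
          · rintro ⟨-, hc⟩; rw [ey1] at hc; exact c2 hc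
      · refine ⟨⟨hxy, ?_⟩, ?_⟩
        · rw [if_neg c1, if_neg c1'] at hlt
          split_ifs at hlt <;> omega
        · rintro ⟨hc, -⟩; rw [ex1] at hc; exact c1' hc
  · rintro ⟨⟨hxy, hlt⟩, hne⟩
    refine ⟨hxy, ?_⟩
    have hne' : ¬ ((w.symm x : ℕ) = k+1 ∧ (w.symm y : ℕ) = k) := by
      rintro ⟨a1, a2⟩; exact hne ⟨ex1.mpr a1, ey1.mpr a2⟩
    have hxyne : ¬ ((w.symm x : ℕ) = k ∧ (w.symm y : ℕ) = k+1) := by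
      rintro ⟨a1, a2⟩; omega
    split_ifs <;> omega
end UngarAux
end Swap

section Cover
namespace UngarAux
variable {n : ℕ}

lemma mem_invSet_mk {w : Weak n} {x y : Fin n} :
    (x, y) ∈ invSet w ↔ x < y ∧ (w.symm y : ℕ) < (w.symm x : ℕ) := by
  rw [mem_invSet]
  exact and_congr Iff.rfl Fin.lt_def

lemma cover_of_descent {w : Weak n} {k : ℕ} (hk : k + 1 < n)
    (hdes : w ⟨k+1, hk⟩ < w ⟨k, Nat.lt_of_succ_lt hk⟩) :
    (w * Equiv.swap (⟨k, Nat.lt_of_succ_lt hk⟩ : Fin n) ⟨k+1, hk⟩) ⋖ w := by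
  have hI : invSet (w * Equiv.swap (⟨k, Nat.lt_of_succ_lt hk⟩ : Fin n) ⟨k+1, hk⟩)
      = invSet w \ {(w ⟨k+1, hk⟩, w ⟨k, Nat.lt_of_succ_lt hk⟩)} := invSet_mul_swap hk hdes
  set u := w * Equiv.swap (⟨k, Nat.lt_of_succ_lt hk⟩ : Fin n) ⟨k+1, hk⟩ with hu
  have hd := d_mem_invSet hk hdes
  have hle : u ≤ w := by rw [le_def, hI]; exact Finset.sdiff_subset
  have hlt : u < w := by
    rw [lt_iff_le_not_ge]
    refine ⟨hle, fun hc => ?_⟩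
    have h2 := hc hd
    rw [hI, Finset.mem_sdiff, Finset.mem_singleton] at h2
    exact h2.2 rfl
  refine ⟨hlt, fun c hc1 hc2 => ?_⟩
  obtain ⟨e, he1, he2⟩ : ∃ e, e ∈ invSet c ∧ e ∉ invSet u :=
    Finset.not_subset.mp ((lt_iff_le_not_ge.mp hc1).2)
  have hcw : invSet c ⊆ invSet w := (lt_iff_le_not_ge.mp hc2).1
  have hew := hcw he1
  rw [hI, Finset.mem_sdiff, Finset.mem_singleton] at he2
  push_neg at he2
  have hed := he2 hew
  have hwc : invSet w ⊆ invSet c := by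
    intro p hp
    by_cases hpd : p = (w ⟨k+1, hk⟩, w ⟨k, Nat.lt_of_succ_lt hk⟩)
    · rw [hpd, ← hed]; exact he1
    · have hpu : p ∈ invSet u := by
        rw [hI, Finset.mem_sdiff, Finset.mem_singleton]; exact ⟨hp, hpd⟩
      exact (lt_iff_le_not_ge.mp hc1).1 hpu
  exact (lt_iff_le_not_ge.mp hc2).2 hwc

lemma adj_case {t w : Weak n} {x y : Fin n} (hw : (x,y) ∈ invSet w) (ht : (x,y) ∉ invSet t)
    (hadj : (w.symm x : ℕ) = (w.symm y : ℕ) + 1) :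
    ∃ k, ∃ hk : k + 1 < n, w ⟨k+1, hk⟩ < w ⟨k, Nat.lt_of_succ_lt hk⟩ ∧
      (w ⟨k+1, hk⟩, w ⟨k, Nat.lt_of_succ_lt hk⟩) ∉ invSet t := by
  obtain ⟨hxy, hpos⟩ := mem_invSet_mk.mp hw
  have hk : (w.symm y : ℕ) + 1 < n := by
    have := (w.symm x).isLt; omega
  have hy : w ⟨(w.symm y : ℕ), Nat.lt_of_succ_lt hk⟩ = y := by
    rw [Fin.eta, Equiv.apply_symm_apply]
  have hx : w ⟨(w.symm y : ℕ) + 1, hk⟩ = x := by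
    have hfe : (⟨(w.symm y : ℕ) + 1, hk⟩ : Fin n) = w.symm x :=
      Fin.ext (show (w.symm y : ℕ) + 1 = (w.symm x : ℕ) by omega)
    rw [hfe, Equiv.apply_symm_apply]
  refine ⟨(w.symm y : ℕ), hk, ?_, ?_⟩
  · rw [hx, hy]; exact hxy
  · rw [hx, hy]; exact ht

lemma exists_descent_aux {t w : Weak n} (hle : invSet t ⊆ invSet w) :
    ∀ d : ℕ, ∀ x y : Fin n, (x, y) ∈ invSet w → (x, y) ∉ invSet t →
      ((w.symm x : ℕ) - (w.symm y : ℕ)) ≤ d + 1 →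
      ∃ k, ∃ hk : k + 1 < n, w ⟨k+1, hk⟩ < w ⟨k, Nat.lt_of_succ_lt hk⟩ ∧
        (w ⟨k+1, hk⟩, w ⟨k, Nat.lt_of_succ_lt hk⟩) ∉ invSet t := by
  intro d
  induction d with
  | zero =>
    intro x y hw ht hd
    obtain ⟨hxy, hqr⟩ := mem_invSet_mk.mp hw
    exact adj_case hw ht (by omega)
  | succ d ih =>
    intro x y hw ht hd
    obtain ⟨hxy, hqr⟩ := mem_invSet_mk.mp hw
    by_cases hadj : (w.symm x : ℕ) = (w.symm y : ℕ) + 1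
    · exact adj_case hw ht hadj
    · have hq1 : (w.symm y : ℕ) + 1 < n := by have := (w.symm x).isLt; omega
      set z := w ⟨(w.symm y : ℕ) + 1, hq1⟩ with hz
      have hzpos : (w.symm z : ℕ) = (w.symm y : ℕ) + 1 := by
        rw [hz, Equiv.symm_apply_apply]
      have hzx : z ≠ x := fun hc => by
        have h2 : w.symm z = w.symm x := by rw [hc]
        rw [Fin.ext_iff] at h2; omega
      have hzy : z ≠ y := fun hc => by
        have h2 : w.symm z = w.symm y := by rw [hc]
        rw [Fin.ext_iff] at h2; omega
      rcases lt_trichotomy y z with hyz | heq | hzy'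
      · -- x < y < z : recurse on (x, z)
        have hxz_w : (x, z) ∈ invSet w := mem_invSet_mk.mpr ⟨hxy.trans hyz, by omega⟩
        have hxz_t : (x, z) ∉ invSet t := by
          intro hc
          rcases invSet_between hxy hyz hc with h1 | h1
          · exact ht h1
          · obtain ⟨-, h2⟩ := mem_invSet_mk.mp (hle h1)
            omega
        exact ih x z hxz_w hxz_t (by omega)
      · exact absurd heq.symm hzy
      · by_cases hzt : (z, y) ∈ invSet t
        · rcases lt_trichotomy z x with hzx' | heq | hxz'
          · rcases invSet_between hzx' hxy hzt with h1 | h1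
            · obtain ⟨-, h2⟩ := mem_invSet_mk.mp (hle h1)
              omega
            · exact absurd h1 ht
          · exact absurd heq hzx
          · have hxz_w : (x, z) ∈ invSet w := mem_invSet_mk.mpr ⟨hxz', by omega⟩
            have hxz_t : (x, z) ∉ invSet t := fun hc => ht (invSet_trans hc hzt)
            exact ih x z hxz_w hxz_t (by omega)
        · have hy : w ⟨(w.symm y : ℕ), Nat.lt_of_succ_lt hq1⟩ = y := by
            rw [Fin.eta, Equiv.apply_symm_apply]
          refine ⟨(w.symm y : ℕ), hq1, ?_, ?_⟩
          · rw [hy]; exact hzy'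
          · rw [hy]; exact hzt

lemma exists_descent {t w : Weak n} (h : t < w) :
    ∃ k, ∃ hk : k + 1 < n, w ⟨k+1, hk⟩ < w ⟨k, Nat.lt_of_succ_lt hk⟩ ∧
      (w ⟨k+1, hk⟩, w ⟨k, Nat.lt_of_succ_lt hk⟩) ∉ invSet t := by
  obtain ⟨p, hp1, hp2⟩ := Finset.not_subset.mp ((lt_iff_le_not_ge.mp h).2)
  obtain ⟨x, y⟩ := p
  exact exists_descent_aux (lt_iff_le_not_ge.mp h).1 n x y hp1 hp2 (by omega)

lemma cover_eq_swap {t w : Weak n} (h : t ⋖ w) :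
    ∃ k, ∃ hk : k + 1 < n, w ⟨k+1, hk⟩ < w ⟨k, Nat.lt_of_succ_lt hk⟩ ∧
      t = w * Equiv.swap (⟨k, Nat.lt_of_succ_lt hk⟩ : Fin n) ⟨k+1, hk⟩ := by
  obtain ⟨k, hk, hdes, hnt⟩ := exists_descent h.lt
  refine ⟨k, hk, hdes, ?_⟩
  have hI := invSet_mul_swap hk hdes
  set u := w * Equiv.swap (⟨k, Nat.lt_of_succ_lt hk⟩ : Fin n) ⟨k+1, hk⟩ with hu
  have htu : t ≤ u := by
    rw [le_def, hI]
    intro p hp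
    rw [Finset.mem_sdiff, Finset.mem_singleton]
    exact ⟨h.lt.le hp, fun hc => hnt (hc ▸ hp)⟩
  have huw : u < w := (cover_of_descent hk hdes).lt
  have hnlt : ¬ t < u := fun hc => h.2 hc huw
  have hut : u ≤ t := by
    rw [lt_iff_le_not_ge] at hnlt
    push_neg at hnlt
    exact hnlt htu
  exact invSet_inj (Finset.Subset.antisymm htu hut)
end UngarAux
end Cover

section Main
namespace UngarAux
open Classical in
theorem main {n : ℕ} (w : Weak n) (m i : ℕ) (hm : 4 ≤ m) (hin : i + m ≤ n)
    (hdec : ∀ t, 1 ≤ t → t + 1 ≤ m - 2 → ∀ (h1 : i+t+1 < n) (h2 : i+t < n),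
      w ⟨i+t+1, h1⟩ < w ⟨i+t, h2⟩)
    (hac : ∀ (h1 : i < n) (h2 : i+(m-2) < n), w ⟨i, h1⟩ < w ⟨i+(m-2), h2⟩)
    (hbc : ∀ (h1 : i+1 < n) (h2 : i+(m-1) < n), w ⟨i+1, h1⟩ < w ⟨i+(m-1), h2⟩) :
    atnissWin w := by
  have hn : 0 < n := by omega
  -- congruence helper
  have wcongr : ∀ (p q : ℕ) (hp : p < n) (hq : q < n), p = q → w ⟨p, hp⟩ = w ⟨q, hq⟩ := by
    intro p q hp hq h; cases h; rfl
  have wlt_congr : ∀ (p q p' q' : ℕ) (hp : p < n) (hq : q < n) (hp' : p' < n) (hq' : q' < n),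
      p = p' → q = q' → w ⟨p, hp⟩ < w ⟨q, hq⟩ → w ⟨p', hp'⟩ < w ⟨q', hq'⟩ := by
    intro p q p' q' hp hq hp' hq' e1 e2 h
    cases e1; cases e2; exact h
  have happ : ∀ v : Fin n, w ⟨(w.symm v : ℕ), (w.symm v).isLt⟩ = v := by
    intro v; rw [Fin.eta, Equiv.apply_symm_apply]
  have hWpos : ∀ (p : ℕ) (hp : p < n), (w.symm (w ⟨p, hp⟩) : ℕ) = p := by
    intro p hp; rw [Equiv.symm_apply_apply]
  -- strictly decreasing block (positions i+1 .. i+m-2)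
  have hchain : ∀ (p q : ℕ), i+1 ≤ p → p < q → q ≤ i+m-2 →
      ∀ (h1 : q < n) (h2 : p < n), w ⟨q, h1⟩ < w ⟨p, h2⟩ := by
    have key : ∀ d : ℕ, ∀ s, 1 ≤ s → s + d + 1 ≤ m - 2 →
        ∀ (h1 : i+s+d+1 < n) (h2 : i+s < n), w ⟨i+s+d+1, h1⟩ < w ⟨i+s, h2⟩ := by
      intro d
      induction d with
      | zero =>
        intro s hs hsm h1 h2
        exact hdec s hs (by omega) h1 h2
      | succ d ih =>
        intro s hs hsm h1 h2
        have h3 : i + s + d + 1 < n := by omega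
        have t1 : w ⟨i+s+(d+1)+1, h1⟩ < w ⟨i+s+d+1, h3⟩ :=
          wlt_congr _ _ _ _ (by omega) (by omega) h1 h3 (by omega) (by omega)
            (hdec (s+d+1) (by omega) (by omega) (by omega) (by omega))
        exact t1.trans (ih s hs (by omega) h3 h2)
    intro p q hp hpq hq h1 h2
    have e1 : w ⟨q, h1⟩ = w ⟨i+(p-i)+(q-p-1)+1, by omega⟩ := wcongr _ _ _ _ (by omega)
    have e2 : w ⟨p, h2⟩ = w ⟨i+(p-i), by omega⟩ := wcongr _ _ _ _ (by omega)
    rw [e1, e2]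
    exact key (q-p-1) (p-i) (by omega) (by omega) _ _
  -- the block predicate on values
  set B : Fin n → Prop := fun v => i+1 ≤ (w.symm v : ℕ) ∧ (w.symm v : ℕ) ≤ i+m-2 with hB
  have hblk : ∀ x y : Fin n, x < y → B x → B y → (w.symm y : ℕ) < (w.symm x : ℕ) := by
    intro x y hxy hbx hby
    rcases lt_trichotomy ((w.symm x : ℕ)) ((w.symm y : ℕ)) with h | h | h
    · exfalso
      have hlt : w ⟨(w.symm y : ℕ), (w.symm y).isLt⟩ < w ⟨(w.symm x : ℕ), (w.symm x).isLt⟩ :=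
        hchain _ _ hbx.1 h hby.2 _ _
      rw [happ, happ] at hlt
      exact absurd (hxy.trans hlt) (lt_irrefl _)
    · exfalso
      have : w.symm x = w.symm y := Fin.ext h
      exact absurd (w.symm.injective this) (ne_of_lt hxy)
    · exact h
  -- the reversal permutation
  have hbound : ∀ j : ℕ, i+1 ≤ j ∧ j ≤ i+m-2 → 2*i+m-1-j < n := by intro j h; omega
  set f : Fin n → Fin n := fun j =>
    if h : i+1 ≤ (j:ℕ) ∧ (j:ℕ) ≤ i+m-2 then ⟨2*i+m-1-(j:ℕ), hbound _ h⟩ else j with hf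
  have hfval : ∀ j : Fin n,
      (f j : ℕ) = if i+1 ≤ (j:ℕ) ∧ (j:ℕ) ≤ i+m-2 then 2*i+m-1-(j:ℕ) else (j:ℕ) := by
    intro j
    have hj : f j = if h : i+1 ≤ (j:ℕ) ∧ (j:ℕ) ≤ i+m-2 then ⟨2*i+m-1-(j:ℕ), hbound _ h⟩ else j :=
      rfl
    rw [hj]
    split_ifs <;> rfl
  have hff : ∀ j : Fin n, f (f j) = j := by
    intro j
    apply Fin.ext
    rw [hfval (f j), hfval j]
    split_ifs <;> omega
  set ρ : Weak n := ⟨f, f, hff, hff⟩ with hρ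
  set w' : Weak n := w * ρ with hw'
  have hw'symm : ∀ v : Fin n, (w'.symm v : ℕ) =
      if i+1 ≤ (w.symm v : ℕ) ∧ (w.symm v : ℕ) ≤ i+m-2
        then 2*i+m-1-(w.symm v : ℕ) else (w.symm v : ℕ) := by
    intro v
    have h1 : w'.symm v = ρ.symm (w.symm v) := by
      rw [hw']; simp [Equiv.Perm.mul_def, Equiv.symm_trans_apply]
    have h2 : ρ.symm (w.symm v) = f (w.symm v) := rfl
    rw [h1, h2, hfval]
  -- C1 : inversions of w'
  have hmemw' : ∀ x y : Fin n, (x,y) ∈ invSet w' ↔ ((x,y) ∈ invSet w ∧ ¬(B x ∧ B y)) := by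
    intro x y
    rw [mem_invSet_mk, mem_invSet_mk]
    constructor
    · rintro ⟨hxy, hlt⟩
      rw [hw'symm, hw'symm] at hlt
      by_cases hb : B x ∧ B y
      · have hyx := hblk x y hxy hb.1 hb.2
        obtain ⟨⟨b1, b2⟩, ⟨b3, b4⟩⟩ := hb
        split_ifs at hlt <;> omega
      · refine ⟨⟨hxy, ?_⟩, hb⟩
        rw [hB] at hb
        simp only [not_and_or] at hb
        split_ifs at hlt <;> omega
    · rintro ⟨⟨hxy, hlt⟩, hb⟩
      refine ⟨hxy, ?_⟩
      rw [hw'symm, hw'symm]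
      rw [hB] at hb
      simp only [not_and_or] at hb
      split_ifs <;> omega
  -- adjacent block pair exclusion
  have hDadj : ∀ z : Weak n, invSet z ⊆ invSet w →
      (∀ t, 1 ≤ t → t+1 ≤ m-2 → ∀ (hk : i+t+1 < n),
        (w ⟨i+t+1, hk⟩, w ⟨i+t, Nat.lt_of_succ_lt hk⟩) ∉ invSet z) →
      ∀ x y : Fin n, (x,y) ∈ invSet z → B x → B y →
        (w.symm x : ℕ) = (w.symm y : ℕ) + 1 → False := by
    intro z hz hD x y hm' hbx hby hadj
    obtain ⟨c1, c2⟩ := hbx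
    obtain ⟨c3, c4⟩ := hby
    have hk : i + (((w.symm y : ℕ)) - i) + 1 < n := by
      have := (w.symm x).isLt; omega
    refine hD ((w.symm y : ℕ) - i) (by omega) (by omega) hk ?_
    have e1 : w ⟨i + ((w.symm y:ℕ) - i) + 1, hk⟩ = x := by
      have e : w ⟨i + ((w.symm y:ℕ) - i) + 1, hk⟩ = w ⟨(w.symm x : ℕ), (w.symm x).isLt⟩ :=
        wcongr _ _ _ _ (by omega)
      rw [e, happ]
    have e2 : w ⟨i + ((w.symm y:ℕ) - i), Nat.lt_of_succ_lt hk⟩ = y := by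
      have e : w ⟨i + ((w.symm y:ℕ) - i), Nat.lt_of_succ_lt hk⟩
          = w ⟨(w.symm y : ℕ), (w.symm y).isLt⟩ := wcongr _ _ _ _ (by omega)
      rw [e, happ]
    rw [e1, e2]
    exact hm'
  -- closure: no inversions among block values
  have hclos : ∀ z : Weak n, invSet z ⊆ invSet w →
      (∀ t, 1 ≤ t → t+1 ≤ m-2 → ∀ (hk : i+t+1 < n),
        (w ⟨i+t+1, hk⟩, w ⟨i+t, Nat.lt_of_succ_lt hk⟩) ∉ invSet z) →
      ∀ x y : Fin n, (x,y) ∈ invSet z → ¬(B x ∧ B y) := by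
    intro z hz hD
    have aux : ∀ d : ℕ, ∀ x y : Fin n, (x,y) ∈ invSet z → B x → B y →
        (w.symm x : ℕ) - (w.symm y : ℕ) ≤ d + 1 → False := by
      intro d
      induction d with
      | zero =>
        intro x y hm' hbx hby hgap
        obtain ⟨hxy, hlt⟩ := mem_invSet_mk.mp (hz hm')
        exact hDadj z hz hD x y hm' hbx hby (by omega)
      | succ d ih =>
        intro x y hm' hbx hby hgap
        obtain ⟨hxy, hlt⟩ := mem_invSet_mk.mp (hz hm')
        by_cases hadj : (w.symm x : ℕ) = (w.symm y : ℕ) + 1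
        · exact hDadj z hz hD x y hm' hbx hby hadj
        · obtain ⟨c1, c2⟩ := hbx
          obtain ⟨c3, c4⟩ := hby
          have hq1 : (w.symm y : ℕ) + 1 < n := by have := (w.symm x).isLt; omega
          set v := w ⟨(w.symm y : ℕ) + 1, hq1⟩ with hv
          have hvpos : (w.symm v : ℕ) = (w.symm y : ℕ) + 1 := hWpos _ _
          have hbv : B v := ⟨by omega, by omega⟩
          have hxv : x < v := by
            have h1 : w ⟨(w.symm x : ℕ), (w.symm x).isLt⟩ < w ⟨(w.symm y:ℕ)+1, hq1⟩ :=
              hchain _ _ (by omega) (by omega) (by omega) _ _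
            rw [happ] at h1; exact h1
          have hvy : v < y := by
            have h1 : w ⟨(w.symm y:ℕ)+1, hq1⟩ < w ⟨(w.symm y : ℕ), (w.symm y).isLt⟩ :=
              hchain _ _ (by omega) (by omega) (by omega) _ _
            rw [happ] at h1; exact h1
          rcases invSet_between hxv hvy hm' with h1 | h1
          · exact ih x v h1 ⟨c1, c2⟩ hbv (by omega)
          · exact hDadj z hz hD v y h1 hbv ⟨c3, c4⟩ (by omega)
    rintro x y hm' ⟨hbx, hby⟩
    obtain ⟨-, hlt⟩ := mem_invSet_mk.mp (hz hm')
    exact aux n x y hm' hbx hby (by omega)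
  -- the set T of middle covers
  set T : Set (Weak n) := {v | ∃ t, 1 ≤ t ∧ t+1 ≤ m-2 ∧ ∃ hk : i+t+1 < n,
    v = w * Equiv.swap (⟨i+t, Nat.lt_of_succ_lt hk⟩ : Fin n) ⟨i+t+1, hk⟩} with hT
  have hTdes : ∀ t, 1 ≤ t → t+1 ≤ m-2 → ∀ hk : i+t+1 < n,
      w ⟨i+t+1, hk⟩ < w ⟨i+t, Nat.lt_of_succ_lt hk⟩ := by
    intro t h1 h2 hk; exact hdec t h1 h2 hk _
  have hTne : T.Nonempty :=
    ⟨_, 1, le_refl 1, by omega, by omega, rfl⟩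
  have hTcov : ∀ v ∈ T, v ⋖ w := by
    rintro v ⟨t, h1, h2, hk, rfl⟩
    exact cover_of_descent hk (hTdes t h1 h2 hk)
  have hDinB : ∀ t, 1 ≤ t → t+1 ≤ m-2 → ∀ hk : i+t+1 < n,
      B (w ⟨i+t+1, hk⟩) ∧ B (w ⟨i+t, Nat.lt_of_succ_lt hk⟩) := by
    intro t h1 h2 hk
    refine ⟨⟨?_, ?_⟩, ⟨?_, ?_⟩⟩ <;> rw [hWpos] <;> omega
  have hsub : invSet w' ⊆ invSet w := by
    intro p hp; obtain ⟨x,y⟩ := p; exact ((hmemw' x y).mp hp).1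
  have hlew : w' ≤ w := hsub
  have hw'leT : ∀ v ∈ T, w' ≤ v := by
    rintro v ⟨t, h1, h2, hk, rfl⟩
    rw [le_def, invSet_mul_swap hk (hTdes t h1 h2 hk)]
    intro p hp
    obtain ⟨x, y⟩ := p
    rw [Finset.mem_sdiff, Finset.mem_singleton]
    have h3 := (hmemw' x y).mp hp
    refine ⟨h3.1, fun hc => ?_⟩
    rw [Prod.mk.injEq] at hc
    exact h3.2 (by rw [hc.1, hc.2]; exact hDinB t h1 h2 hk)
  have hGLB : IsGLB (insert w T) w' := by
    constructor
    · rintro v (rfl | hv)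
      · exact hlew
      · exact hw'leT v hv
    · intro z hz
      have hzw : invSet z ⊆ invSet w := hz (Set.mem_insert w T)
      have hzD : ∀ t, 1 ≤ t → t+1 ≤ m-2 → ∀ hk : i+t+1 < n,
          (w ⟨i+t+1, hk⟩, w ⟨i+t, Nat.lt_of_succ_lt hk⟩) ∉ invSet z := by
        intro t h1 h2 hk hc
        have hzv : z ≤ w * Equiv.swap (⟨i+t, Nat.lt_of_succ_lt hk⟩ : Fin n) ⟨i+t+1, hk⟩ :=
          hz (Set.mem_insert_of_mem w ⟨t, h1, h2, hk, rfl⟩)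
        have h4 := hzv hc
        rw [invSet_mul_swap hk (hTdes t h1 h2 hk), Finset.mem_sdiff, Finset.mem_singleton] at h4
        exact h4.2 rfl
      intro p hp
      obtain ⟨x, y⟩ := p
      exact (hmemw' x y).mpr ⟨hzw hp, hclos z hzw hzD x y hp⟩
  have hw'mem : w' ∈ ungN w := ⟨T, hTne, hTcov, hGLB⟩
  -- values of w'
  have hw'app : ∀ (p : ℕ) (hp : p < n) (q : ℕ) (hq : q < n),
      (if i+1 ≤ p ∧ p ≤ i+m-2 then 2*i+m-1-p else p) = q → w' ⟨p, hp⟩ = w ⟨q, hq⟩ := by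
    intro p hp q hq he
    have h1 : w' ⟨p, hp⟩ = w (ρ ⟨p, hp⟩) := rfl
    rw [h1]
    congr 1
    apply Fin.ext
    have h2 : (ρ ⟨p, hp⟩ : ℕ) = (f ⟨p, hp⟩ : ℕ) := rfl
    rw [h2, hfval]
    exact he
  -- every descent of w' is outside the window and agrees with w there
  have hdes' : ∀ (k : ℕ) (hk : k+1 < n),
      w' ⟨k+1, hk⟩ < w' ⟨k, Nat.lt_of_succ_lt hk⟩ →
      w' ⟨k+1, hk⟩ = w ⟨k+1, hk⟩ ∧ w' ⟨k, Nat.lt_of_succ_lt hk⟩ = w ⟨k, Nat.lt_of_succ_lt hk⟩ := by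
    intro k hk hd
    have hrange : k+1 ≤ i ∨ i+m-1 ≤ k := by
      by_contra hc
      push_neg at hc
      obtain ⟨hc1, hc2⟩ := hc
      by_cases hki : k = i
      · subst hki
        have e1 : w' ⟨k, Nat.lt_of_succ_lt hk⟩ = w ⟨k, Nat.lt_of_succ_lt hk⟩ :=
          hw'app _ _ _ _ (by rw [if_neg (by omega)])
        have e2 : w' ⟨k+1, hk⟩ = w ⟨k+m-2, by omega⟩ :=
          hw'app _ _ _ _ (by rw [if_pos (by omega)]; omega)
        rw [e1, e2] at hd
        have h3 : w ⟨k, Nat.lt_of_succ_lt hk⟩ < w ⟨k+m-2, by omega⟩ :=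
          wlt_congr _ _ _ _ (by omega) (by omega) _ _ (by omega) (by omega)
            (hac (by omega) (by omega))
        exact absurd (hd.trans h3) (lt_irrefl _)
      · by_cases hkm : k = i+m-2
        · subst hkm
          have e1 : w' ⟨i+m-2, Nat.lt_of_succ_lt hk⟩ = w ⟨i+1, by omega⟩ :=
            hw'app _ _ _ _ (by rw [if_pos (by omega)]; omega)
          have e2 : w' ⟨i+m-2+1, hk⟩ = w ⟨i+m-1, by omega⟩ :=
            hw'app _ _ _ _ (by rw [if_neg (by omega)]; omega)
          rw [e1, e2] at hd
          have h3 : w ⟨i+1, by omega⟩ < w ⟨i+m-1, by omega⟩ :=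
            wlt_congr _ _ _ _ (by omega) (by omega) _ _ (by omega) (by omega)
              (hbc (by omega) (by omega))
          exact absurd (hd.trans h3) (lt_irrefl _)
        · -- middle : i+1 ≤ k ≤ i+m-3
          have e1 : w' ⟨k, Nat.lt_of_succ_lt hk⟩ = w ⟨2*i+m-1-k, by omega⟩ :=
            hw'app _ _ _ _ (by rw [if_pos (by omega)])
          have e2 : w' ⟨k+1, hk⟩ = w ⟨2*i+m-2-k, by omega⟩ :=
            hw'app _ _ _ _ (by rw [if_pos (by omega)]; omega)
          rw [e1, e2] at hd
          have h3 : w ⟨2*i+m-1-k, by omega⟩ < w ⟨2*i+m-2-k, by omega⟩ :=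
            hchain _ _ (by omega) (by omega) (by omega) _ _
          exact absurd (hd.trans h3) (lt_irrefl _)
    rcases hrange with hr | hr
    · exact ⟨hw'app _ _ _ _ (by rw [if_neg (by omega)]),
        hw'app _ _ _ _ (by rw [if_neg (by omega)])⟩
    · exact ⟨hw'app _ _ _ _ (by rw [if_neg (by omega)]),
        hw'app _ _ _ _ (by rw [if_neg (by omega)])⟩
  -- transfer of Ungar moves
  have htrans : ∀ u, u ∈ ungN w' → u ∈ ungN w := by
    rintro u ⟨T', hT'ne, hT'cov, hT'glb⟩
    set T'' : Set (Weak n) := T ∪ {v | ∃ (k : ℕ) (hk : k+1 < n)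
        (hd : w' ⟨k+1, hk⟩ < w' ⟨k, Nat.lt_of_succ_lt hk⟩),
        (w' * Equiv.swap (⟨k, Nat.lt_of_succ_lt hk⟩ : Fin n) ⟨k+1, hk⟩) ∈ T' ∧
        v = w * Equiv.swap (⟨k, Nat.lt_of_succ_lt hk⟩ : Fin n) ⟨k+1, hk⟩} with hT''
    have hlbeq : ∀ z : Weak n, z ∈ lowerBounds (insert w' T') ↔ z ∈ lowerBounds (insert w T'') := by
      intro z
      constructor
      · intro hz
        have hzw' : z ≤ w' := hz (Set.mem_insert _ _)
        rintro v (rfl | hv | hv)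
        · exact le_trans hzw' hlew
        · exact le_trans hzw' (hw'leT v hv)
        · obtain ⟨k, hk, hd, hmem, rfl⟩ := hv
          obtain ⟨e1, e2⟩ := hdes' k hk hd
          have hdw : w ⟨k+1, hk⟩ < w ⟨k, Nat.lt_of_succ_lt hk⟩ := by
            rw [← e1, ← e2]; exact hd
          rw [le_def, invSet_mul_swap hk hdw]
          have hzt' : z ≤ w' * Equiv.swap (⟨k, Nat.lt_of_succ_lt hk⟩ : Fin n) ⟨k+1, hk⟩ :=
            hz (Set.mem_insert_of_mem _ hmem)
          intro p hp
          have h2 := hzt' hp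
          rw [invSet_mul_swap hk hd, Finset.mem_sdiff, Finset.mem_singleton] at h2
          rw [Finset.mem_sdiff, Finset.mem_singleton]
          refine ⟨hsub h2.1, ?_⟩
          rw [← e1, ← e2]
          exact h2.2
      · intro hz
        have hzw : z ≤ w := hz (Set.mem_insert _ _)
        have hzD : ∀ t, 1 ≤ t → t+1 ≤ m-2 → ∀ hk : i+t+1 < n,
            (w ⟨i+t+1, hk⟩, w ⟨i+t, Nat.lt_of_succ_lt hk⟩) ∉ invSet z := by
          intro t h1 h2 hk hc
          have hzv : z ≤ w * Equiv.swap (⟨i+t, Nat.lt_of_succ_lt hk⟩ : Fin n) ⟨i+t+1, hk⟩ :=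
            hz (Set.mem_insert_of_mem _ (Or.inl ⟨t, h1, h2, hk, rfl⟩))
          have h3 := hzv hc
          rw [invSet_mul_swap hk (hTdes t h1 h2 hk), Finset.mem_sdiff,
            Finset.mem_singleton] at h3
          exact h3.2 rfl
        have hzw' : z ≤ w' := by
          intro p hp
          obtain ⟨x, y⟩ := p
          exact (hmemw' x y).mpr ⟨hzw hp, hclos z hzw hzD x y hp⟩
        rintro v (rfl | hv)
        · exact hzw'
        · obtain ⟨k, hk, hd', heq⟩ := cover_eq_swap (hT'cov v hv)
          obtain ⟨e1, e2⟩ := hdes' k hk hd'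
          have hdw : w ⟨k+1, hk⟩ < w ⟨k, Nat.lt_of_succ_lt hk⟩ := by
            rw [← e1, ← e2]; exact hd'
          have hmem'' : (w * Equiv.swap (⟨k, Nat.lt_of_succ_lt hk⟩ : Fin n) ⟨k+1, hk⟩) ∈ T'' :=
            Or.inr ⟨k, hk, hd', heq ▸ hv, rfl⟩
          have hzv : z ≤ w * Equiv.swap (⟨k, Nat.lt_of_succ_lt hk⟩ : Fin n) ⟨k+1, hk⟩ :=
            hz (Set.mem_insert_of_mem _ hmem'')
          rw [heq, le_def, invSet_mul_swap hk hd']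
          intro p hp
          rw [Finset.mem_sdiff, Finset.mem_singleton]
          have h3 := hzv hp
          rw [invSet_mul_swap hk hdw, Finset.mem_sdiff, Finset.mem_singleton] at h3
          refine ⟨hzw' hp, ?_⟩
          rw [e1, e2]
          exact h3.2
    refine ⟨T'', ?_, ?_, ?_⟩
    · obtain ⟨v0, hv0⟩ := hTne
      exact ⟨v0, Or.inl hv0⟩
    · rintro v (hv | hv)
      · exact hTcov v hv
      · obtain ⟨k, hk, hd, hmem, rfl⟩ := hv
        obtain ⟨e1, e2⟩ := hdes' k hk hd
        exact cover_of_descent hk (by rw [← e1, ← e2]; exact hd)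
    · exact ⟨(hlbeq u).mp hT'glb.1, fun z hz => hT'glb.2 ((hlbeq z).mpr hz)⟩
  -- conclusion
  rcases atniss_or_eeta w with hA | hE
  · exact hA
  · rw [eetaWin] at hE
    have hA' := hE w' hw'mem
    rw [atnissWin] at hA' ⊢
    obtain ⟨u, hu, heu⟩ := hA'
    exact ⟨u, htrans u hu, heu⟩
end UngarAux
end Main

/-- If `w ∈ S_n` consecutively contains a pattern `1 (m−1) (m−2) ⋯ 2 m` for some `m ≥ 4`
(i.e., there is a window `w(i), …, w(i+m−1)` whose standardization is `1 (m−1) ⋯ 2 m`: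
the first entry is smallest, the last entry is largest, and the middle `m − 2` entries are
decreasing), then `w` is an Atniss win in the weak order on `S_n`. -/
theorem atnissWin_of_consecutive_pattern {n : ℕ} (w : Weak n)
    (h : ∃ m, ∃ _ : 4 ≤ m, ∃ i, ∃ _ : i + m ≤ n,
      (∀ t (_ : 1 ≤ t) (_ : t + 1 ≤ m - 2),
        w ⟨i + t + 1, by omega⟩ < w ⟨i + t, by omega⟩) ∧
      w ⟨i, by omega⟩ < w ⟨i + (m - 2), by omega⟩ ∧
      w ⟨i + 1, by omega⟩ < w ⟨i + (m - 1), by omega⟩) :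
    atnissWin w := by
  obtain ⟨m, hm, i, hin, hdec, hac, hbc⟩ := h
  exact UngarAux.main w m i hm hin (fun t h1 h2 _ _ => hdec t h1 h2)
    (fun _ _ => hac) (fun _ _ => hbc)
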